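/- arXiv:1306.2871 — 4 statements merged into one kernel-verified Lean document; each statement's English description precedes it below -/
import Mathlib

section
/- Let n ≥ 1 and let k ∈ ℕ^{n+1} satisfy k_0 = 1 and (k_j = 0 ⇒ k_{j+1} = 0) for all 0 ≤ j ≤ n-1. Let k̃ = (k_1,…,k_n,0) be the left shift of k, let u ∈ ℕ^{n+1} be given by u_j = min{1, k̃_j}, and let V(k) = {b ∈ ℕ^{n+1} : u_j ≤ b_j ≤ min{k_j, k̃_j} for all 0 ≤ j ≤ n}. Then for every x ∈ ℝ^{n+1}: a(x,k) = Σ_{b ∈ V(k)} Π_{j=0}^{n} C(k_j,b_j) · C(k̃_j - u_j, b_j - u_j) · (-x_j)^{k̃_j - b_j} · x_j^{k_j - b_j} · (1 - x_j^2)^{b_j}. -/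
/-- Amplitude factor `f^{(p,q)}`. -/
noncomputable def ampF (p q : ℤ) (x : ℝ) : ℝ :=
  if p < 0 ∨ q < 0 then 0
  else if q = 0 then x ^ p.toNat
  else if p = 0 then 0
  else ∑ j ∈ Finset.Icc 1 (min p q).toNat,
    (-1 : ℝ) ^ (q.toNat - j) * (p.toNat.choose j : ℝ) * ((q.toNat - 1).choose (j - 1) : ℝ) *
      x ^ (p.toNat + q.toNat - 2 * j) * (1 - x ^ 2) ^ j

/-- Amplitude polynomial `a(x,k)`. -/
noncomputable def ampA (n : ℕ) (x : Fin (n+1) → ℝ) (k : Fin (n+1) → ℕ) : ℝ :=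
  (if k 0 = 1 then (1:ℝ) else 0) * x (Fin.last n) ^ k (Fin.last n) *
    ∏ j : Fin n, ampF (k j.castSucc) (k j.succ) (x j.castSucc)
/-- Left shift `k̃ = (k_1,…,k_n,0)` of a lattice point `k ∈ ℕ^{n+1}`. -/
def lshift (n : ℕ) (k : Fin (n+1) → ℕ) (j : Fin (n+1)) : ℕ :=
  if h : (j : ℕ) < n then k ⟨(j : ℕ) + 1, by omega⟩ else 0

/-!
Each factor `f^{(k_j, k_{j+1})}(x_j)` is a sum over `b_j` in `[min 1 k_{j+1}, min k_j k_{j+1}]`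
(for `k_{j+1} = 0` this is the single term `b_j = 0`, giving `x_j^{k_j}`), and the last factor
`x_n^{k_n}` is the same sum with `k̃_n = 0`. Expanding the product of these sums over `j`
gives the sum over the box `V(k)`.
-/

lemma ampF_natCast_zero_right (p : ℕ) (x : ℝ) : ampF p 0 x = x ^ p := by
  simp [ampF]

lemma ampF_zero_left_of_ne_zero {q : ℕ} (hq : q ≠ 0) (x : ℝ) : ampF 0 q x = 0 := by
  simp [ampF, hq]

lemma ampF_natCast_of_ne_zero {p q : ℕ} (hp : p ≠ 0) (hq : q ≠ 0) (x : ℝ) :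
    ampF p q x = ∑ j ∈ Finset.Icc 1 (min p q),
      (-1 : ℝ) ^ (q - j) * (p.choose j : ℝ) * ((q - 1).choose (j - 1) : ℝ) *
        x ^ (p + q - 2 * j) * (1 - x ^ 2) ^ j := by
  have hmin : (min (p : ℤ) q).toNat = min p q := by rw [← Nat.cast_min, Int.toNat_natCast]
  simp [ampF, hp, hq, hmin]

lemma ampF_natCast_eq_sum (p q : ℕ) (x : ℝ) :
    ampF p q x = ∑ b ∈ Finset.Icc (min 1 q) (min p q),
      (p.choose b : ℝ) * ((q - min 1 q).choose (b - min 1 q) : ℝ) *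
        (-x) ^ (q - b) * x ^ (p - b) * (1 - x ^ 2) ^ b := by
  obtain rfl | hq := eq_or_ne q 0
  · simp [ampF_natCast_zero_right]
  have hq1 : min 1 q = 1 := by omega
  obtain rfl | hp := eq_or_ne p 0
  · simp [ampF_zero_left_of_ne_zero hq, hq1]
  rw [ampF_natCast_of_ne_zero hp hq, hq1]
  refine Finset.sum_congr rfl fun b hb => ?_
  obtain ⟨-, hbp, hbq⟩ : 1 ≤ b ∧ b ≤ p ∧ b ≤ q := by simp only [Finset.mem_Icc] at hb; omega
  have hsplit : x ^ (p + q - 2 * b) = x ^ (q - b) * x ^ (p - b) := by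
    rw [← pow_add]; congr 1; omega
  rw [hsplit, neg_pow]
  ring

lemma lshift_castSucc (n : ℕ) (k : Fin (n+1) → ℕ) (j : Fin n) :
    lshift n k j.castSucc = k j.succ := by
  simp [lshift, Fin.succ]

lemma lshift_last (n : ℕ) (k : Fin (n+1) → ℕ) : lshift n k (Fin.last n) = 0 := by
  simp [lshift]

theorem amplitude_polynomial_expansion_general (n : ℕ) (k : Fin (n+1) → ℕ)
    (hk0 : k 0 = 1)
    (x : Fin (n+1) → ℝ) :
    ampA n x k =
      ∑ b ∈ Fintype.piFinset (fun j : Fin (n+1) =>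
          Finset.Icc (min 1 (lshift n k j)) (min (k j) (lshift n k j))),
        ∏ j : Fin (n+1),
          ((k j).choose (b j) : ℝ) *
            ((lshift n k j - min 1 (lshift n k j)).choose
              (b j - min 1 (lshift n k j)) : ℝ) *
            (-(x j)) ^ (lshift n k j - b j) * (x j) ^ (k j - b j) *
            (1 - x j ^ 2) ^ (b j) := by
  rw [← Finset.prod_univ_sum (f := fun j b => ((k j).choose b : ℝ) *
      ((lshift n k j - min 1 (lshift n k j)).choose (b - min 1 (lshift n k j)) : ℝ) *
      (-(x j)) ^ (lshift n k j - b) * (x j) ^ (k j - b) * (1 - x j ^ 2) ^ b),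
    Fin.prod_univ_castSucc, ampA, hk0, if_pos rfl, one_mul, mul_comm]
  congr 1
  · refine Finset.prod_congr rfl fun j _ => ?_
    rw [ampF_natCast_eq_sum, lshift_castSucc]
  · simp [lshift_last]

/-- explicit multinomial expansion of the amplitude polynomial `a(x,k)`
    over the box `V(k)` -/
theorem amplitude_polynomial_expansion (n : ℕ) (hn : 1 ≤ n) (k : Fin (n+1) → ℕ)
    (hk0 : k 0 = 1) (hk : ∀ j : Fin n, k j.castSucc = 0 → k j.succ = 0)
    (x : Fin (n+1) → ℝ) :
    ampA n x k =
      ∑ b ∈ Fintype.piFinset (fun j : Fin (n+1) =>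
          Finset.Icc (min 1 (lshift n k j)) (min (k j) (lshift n k j))),
        ∏ j : Fin (n+1),
          ((k j).choose (b j) : ℝ) *
            ((lshift n k j - min 1 (lshift n k j)).choose
              (b j - min 1 (lshift n k j)) : ℝ) *
            (-(x j)) ^ (lshift n k j - b j) * (x j) ^ (k j - b j) *
            (1 - x j ^ 2) ^ (b j) :=
  amplitude_polynomial_expansion_general n k hk0 x
end

section
/- For every n ≥ 1 and every x ∈ [-1,1]^{n+1}, the family (a(x,k)^2 + b(x,k)^2)_{k ∈ ℕ^{n+1}} is summable and Σ_{k ∈ ℕ^{n+1}} (a(x,k)^2 + b(x,k)^2) = 1. -/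
/-- Amplitude factor `g^{(p,q)}`. -/
noncomputable def ampG (p q : ℤ) (x : ℝ) : ℝ :=
  if p < 0 ∨ q < 0 then 0
  else Real.sqrt (1 - x ^ 2) * ∑ j ∈ Finset.Icc 0 (min p q).toNat,
    (-1 : ℝ) ^ (q.toNat - j) * (p.toNat.choose j : ℝ) * (q.toNat.choose j : ℝ) *
      x ^ (p.toNat + q.toNat - 2 * j) * (1 - x ^ 2) ^ j

/-- Amplitude quasi-polynomial `b(x,k)`. -/
noncomputable def ampB (n : ℕ) (x : Fin (n+1) → ℝ) (k : Fin (n+1) → ℕ) : ℝ :=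
  (if k 0 = 0 then (1:ℝ) else 0) * Real.sqrt (1 - x (Fin.last n) ^ 2) *
    x (Fin.last n) ^ k (Fin.last n) *
    ∏ j : Fin n, ampG (k j.castSucc) (k j.succ) (x j.castSucc)


/-!
Write `s = √(1 - x²)`. The amplitude factors satisfy the rotation recurrences
`f^{(p+1,q+1)} = x f^{(p,q+1)} + s g^{(p,q)}` and
`g^{(p,q+1)} = s f^{(p,q+1)} - x g^{(p,q)}`, so that
`f^{(p+1,q)}² + g^{(p,q)}² = f^{(p,q)}² + g^{(p,q-1)}²` (with `g^{(p,-1)} = 0`).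

Let `Ψ(p)` and `Χ(p)` (`energyA`, `energyB`) be the sums of the squared products `x_n^{k_n} ∏ f`
and `s_n x_n^{k_n} ∏ g` over all `k` with `k_0 = p`. Peeling off the first factor and summing the
identity above by parts against the layer below gives, by induction on `n`,
`Ψ(p) = Ψ(p+1) + Χ(p)`; the boundary term vanishes because `g^{(p,q)}(x) → 0` as `q → ∞`.
Since `f^{(0,q)} = [q = 0]`, `Ψ(0) = 1`, and the total energy is `Ψ(1) + Χ(0) = Ψ(0) = 1`.
-/

open Finset Filter Topology

open scoped ENNReal

/-- The coefficient of `X ^ j` in `(X + x) ^ p`. -/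
def binomTerm (x : ℝ) (p j : ℕ) : ℝ := p.choose j * x ^ (p - j)

section binomTerm

variable {x : ℝ} {p j : ℕ}

theorem binomTerm_of_lt (h : p < j) : binomTerm x p j = 0 := by
  simp [binomTerm, Nat.choose_eq_zero_of_lt h]

theorem binomTerm_zero_right : binomTerm x p 0 = x ^ p := by
  simp [binomTerm]

theorem binomTerm_succ_zero : binomTerm x (p + 1) 0 = x * binomTerm x p 0 := by
  simp [binomTerm, pow_succ, mul_comm]

theorem binomTerm_succ_succ :
    binomTerm x (p + 1) (j + 1) = x * binomTerm x p (j + 1) + binomTerm x p j := by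
  rcases lt_or_ge p (j + 1) with h | h
  · rw [binomTerm_of_lt h]
    obtain rfl | h := (Nat.lt_succ_iff.mp h).eq_or_lt
    · simp [binomTerm]
    · rw [binomTerm_of_lt h, binomTerm_of_lt (by omega)]; ring
  · simp only [binomTerm, Nat.choose_succ_succ', Nat.add_sub_add_right, Nat.cast_add,
      show p - j = p - (j + 1) + 1 by omega, pow_succ]
    ring

theorem binomTerm_mul_binomTerm_neg {q i : ℕ} (hj : j ≤ p) (hi : i ≤ q) :
    binomTerm x p j * binomTerm (-x) q i =
      (-1 : ℝ) ^ (q - i) * p.choose j * q.choose i * x ^ (p + q - (i + j)) := by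
  rw [binomTerm, binomTerm, neg_pow, show p + q - (i + j) = (p - j) + (q - i) by omega, pow_add]
  ring

theorem tendsto_binomTerm_atTop (hx : |x| < 1) (j : ℕ) :
    Tendsto (fun p => binomTerm x p j) atTop (𝓝 0) := by
  rw [← tendsto_add_atTop_iff_nat j]
  simpa [binomTerm] using (summable_choose_mul_geometric_of_norm_lt_one j
    (by rwa [Real.norm_eq_abs] : ‖x‖ < 1)).tendsto_atTop_zero

end binomTerm

/-- `g^{(p,q)}(x) / √(1 - x²)`, summed over a range that depends on `p` only. -/
def gPoly (x : ℝ) (p q : ℕ) : ℝ :=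
  ∑ j ∈ range (p + 1), binomTerm x p j * binomTerm (-x) q j * (1 - x ^ 2) ^ j

/-- `f^{(p,q+1)}(x)`, summed over a range that depends on `p` only. -/
def fPoly (x : ℝ) (p q : ℕ) : ℝ :=
  ∑ j ∈ range p, binomTerm x p (j + 1) * binomTerm (-x) q j * (1 - x ^ 2) ^ (j + 1)

section Recurrences

variable {x : ℝ} {p q : ℕ}

theorem ampG_natCast : ampG p q x = √(1 - x ^ 2) * gPoly x p q := by
  simp only [ampG, Nat.cast_nonneg, not_lt_of_ge, or_self, if_false, ← Nat.cast_min,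
    Int.toNat_natCast, gPoly]
  congr 1
  calc _ = ∑ j ∈ Icc 0 (min p q), binomTerm x p j * binomTerm (-x) q j * (1 - x ^ 2) ^ j :=
        sum_congr rfl fun j hj => by
          simp only [mem_Icc] at hj
          rw [binomTerm_mul_binomTerm_neg (by omega) (by omega), two_mul]
    _ = _ := sum_subset (fun j => by simp only [mem_Icc, mem_range]; omega) fun j hj hj' => by
          have hqj : q < j := by simp only [mem_Icc, mem_range] at hj hj'; omega
          rw [binomTerm_of_lt hqj, mul_zero, zero_mul]

theorem ampF_natCast_succ : ampF p (q + 1 : ℕ) x = fPoly x p q := by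
  simp only [ampF, Nat.cast_nonneg, not_lt_of_ge, or_self, if_false, ← Nat.cast_min,
    Int.toNat_natCast, fPoly, Nat.cast_eq_zero, Nat.succ_ne_zero, Nat.add_sub_cancel]
  split_ifs with hp
  · simp [hp]
  rw [← Ico_add_one_right_eq_Icc, ← zero_add 1, ← sum_Ico_add', ← range_eq_Ico]
  simp only [zero_add]
  calc _ = ∑ i ∈ range (min p (q + 1)),
        binomTerm x p (i + 1) * binomTerm (-x) q i * (1 - x ^ 2) ^ (i + 1) :=
        sum_congr rfl fun i hi => by
          simp only [mem_range] at hi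
          rw [binomTerm_mul_binomTerm_neg (by omega) (by omega), Nat.add_sub_add_right,
            Nat.add_sub_cancel, show p + (q + 1) - 2 * (i + 1) = p + q - (i + (i + 1)) by omega]
    _ = _ := sum_subset (fun i => by simp only [mem_range]; omega) fun i hi hi' => by
          have hqi : q < i := by simp only [mem_range] at hi hi'; omega
          rw [binomTerm_of_lt hqi, mul_zero, zero_mul]

theorem ampF_zero_right (p : ℕ) : ampF p 0 x = x ^ p := by
  simp [ampF]

theorem ampF_zero_left (q : ℕ) : ampF (0 : ℕ) q x = if q = 0 then 1 else 0 := by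
  simp [ampF]

theorem gPoly_zero_right : gPoly x p 0 = x ^ p := by
  rw [gPoly, sum_range_succ', sum_eq_zero fun j _ => by rw [binomTerm_of_lt j.succ_pos]; ring]
  simp [binomTerm_zero_right]

theorem ampG_zero_right (p : ℕ) : ampG p 0 x = √(1 - x ^ 2) * x ^ p := by
  simpa [gPoly_zero_right] using ampG_natCast (p := p) (q := 0) (x := x)

theorem fPoly_succ_left : fPoly x (p + 1) q = x * fPoly x p q + (1 - x ^ 2) * gPoly x p q := by
  have hf : fPoly x p q = ∑ j ∈ range (p + 1),
      binomTerm x p (j + 1) * binomTerm (-x) q j * (1 - x ^ 2) ^ (j + 1) := by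
    rw [sum_range_succ, binomTerm_of_lt p.lt_succ_self, zero_mul, zero_mul, add_zero, fPoly]
  rw [hf, fPoly, gPoly, mul_sum, mul_sum, ← sum_add_distrib]
  exact sum_congr rfl fun j _ => by rw [binomTerm_succ_succ]; ring

theorem gPoly_succ_right : gPoly x p (q + 1) = fPoly x p q - x * gPoly x p q := by
  have hterm : ∀ j,
      binomTerm x p (j + 1) * binomTerm (-x) (q + 1) (j + 1) * (1 - x ^ 2) ^ (j + 1) =
        binomTerm x p (j + 1) * binomTerm (-x) q j * (1 - x ^ 2) ^ (j + 1)
        - x * (binomTerm x p (j + 1) * binomTerm (-x) q (j + 1) * (1 - x ^ 2) ^ (j + 1)) :=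
    fun j => by rw [binomTerm_succ_succ]; ring
  rw [gPoly, gPoly, sum_range_succ', sum_range_succ' _ p, fPoly, binomTerm_succ_zero]
  simp only [hterm, sum_sub_distrib, ← mul_sum]
  ring

theorem ampF_succ_succ (hx : x ^ 2 ≤ 1) :
    ampF (p + 1 : ℕ) (q + 1 : ℕ) x =
      x * ampF p (q + 1 : ℕ) x + √(1 - x ^ 2) * ampG p q x := by
  rw [ampF_natCast_succ, ampF_natCast_succ, ampG_natCast, fPoly_succ_left, ← mul_assoc,
    Real.mul_self_sqrt (by linarith)]

theorem ampG_succ :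
    ampG p (q + 1 : ℕ) x = √(1 - x ^ 2) * ampF p (q + 1 : ℕ) x - x * ampG p q x := by
  rw [ampG_natCast, ampG_natCast, ampF_natCast_succ, gPoly_succ_right]
  ring

theorem sq_pow_succ_add_sq_sqrt_mul_pow (hx : x ^ 2 ≤ 1) (p : ℕ) :
    (x ^ (p + 1)) ^ 2 + (√(1 - x ^ 2) * x ^ p) ^ 2 = (x ^ p) ^ 2 := by
  linear_combination (x ^ p) ^ 2 * Real.sq_sqrt (by linarith : 0 ≤ 1 - x ^ 2)

theorem ampF_sq_add_ampG_sq_zero (hx : x ^ 2 ≤ 1) (p : ℕ) :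
    ampF (p + 1 : ℕ) 0 x ^ 2 + ampG p 0 x ^ 2 = ampF p 0 x ^ 2 := by
  rw [ampF_zero_right, ampF_zero_right, ampG_zero_right, sq_pow_succ_add_sq_sqrt_mul_pow hx]

theorem ampF_sq_add_ampG_sq_succ (hx : x ^ 2 ≤ 1) (p q : ℕ) :
    ampF (p + 1 : ℕ) (q + 1 : ℕ) x ^ 2 + ampG p (q + 1 : ℕ) x ^ 2 =
      ampF p (q + 1 : ℕ) x ^ 2 + ampG p q x ^ 2 := by
  rw [ampF_succ_succ hx, ampG_succ]
  linear_combination (ampF p (q + 1 : ℕ) x ^ 2 + ampG p q x ^ 2) *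
    Real.sq_sqrt (by linarith : 0 ≤ 1 - x ^ 2)

theorem tendsto_ampG_atTop (hx : x ^ 2 ≤ 1) (p : ℕ) :
    Tendsto (fun q : ℕ => ampG p q x) atTop (𝓝 0) := by
  simp_rw [ampG_natCast]
  rcases hx.eq_or_lt with hx1 | hx1
  · simp [hx1]
  have habs : |-x| < 1 := by rwa [abs_neg, ← sq_lt_one_iff_abs_lt_one]
  rw [← mul_zero √(1 - x ^ 2), ← sum_const_zero (s := range (p + 1))]
  refine (tendsto_finsetSum _ fun j _ => ?_).const_mul _
  simpa using ((tendsto_binomTerm_atTop habs j).const_mul (binomTerm x p j)).mul_const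
    ((1 - x ^ 2) ^ j)

end Recurrences

theorem ENNReal.tsum_mul_add_tsum_mul_of_balance {F F' G Ψ Χ : ℕ → ℝ≥0∞}
    (hbal₀ : F' 0 + G 0 = F 0) (hbal : ∀ q, F' (q + 1) + G (q + 1) = F (q + 1) + G q)
    (hG : Tendsto G atTop (𝓝 0)) (hΨ : ∀ q, Ψ q = Ψ (q + 1) + Χ q) (hΨ₀ : Ψ 0 ≠ ∞) :
    ∑' q, F' q * Ψ q + ∑' q, G q * Χ q = ∑' q, F q * Ψ q := by
  have hpartial : ∀ N, ∑ q ∈ range (N + 1), F' q * Ψ q + ∑ q ∈ range (N + 1), G q * Χ q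
      + G N * Ψ (N + 1) = ∑ q ∈ range (N + 1), F q * Ψ q := by
    intro N
    induction N with
    | zero =>
      rw [sum_range_one, sum_range_one, sum_range_one, ← hbal₀, hΨ 0]
      ring
    | succ N ih =>
      have hstep : G N * Ψ (N + 1) + F (N + 1) * Ψ (N + 1) =
          F' (N + 1) * Ψ (N + 1) + G (N + 1) * Χ (N + 1) + G (N + 1) * Ψ (N + 1 + 1) := by
        rw [← add_mul, add_comm, ← hbal, add_mul, hΨ (N + 1)]
        ring
      rw [sum_range_succ _ (N + 1), sum_range_succ _ (N + 1), sum_range_succ _ (N + 1), ← ih,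
        add_assoc _ (G N * Ψ (N + 1)), hstep]
      ring
  have hΨ_le : ∀ q, Ψ q ≤ Ψ 0 :=
    fun q => antitone_nat_of_succ_le (fun q => (hΨ q).symm ▸ le_self_add) (Nat.zero_le q)
  have hboundary : Tendsto (fun N => G N * Ψ (N + 1)) atTop (𝓝 0) := by
    refine tendsto_of_tendsto_of_tendsto_of_le_of_le tendsto_const_nhds
      (by simpa using ENNReal.Tendsto.mul_const hG (Or.inr hΨ₀)) (fun _ => zero_le)
      fun N => by gcongr; exact hΨ_le _
  have hsum : ∀ f : ℕ → ℝ≥0∞,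
      Tendsto (fun N => ∑ q ∈ range (N + 1), f q) atTop (𝓝 (∑' q, f q)) :=
    fun f => (tendsto_add_atTop_iff_nat 1).2 (ENNReal.tendsto_nat_tsum f)
  have hlim := ((hsum fun q => F' q * Ψ q).add (hsum fun q => G q * Χ q)).add hboundary
  rw [add_zero] at hlim
  exact tendsto_nhds_unique (hlim.congr hpartial) (hsum _)

theorem ENNReal.tsum_fin_cons {α : Type*} {n : ℕ} (f : (Fin (n + 1) → α) → ℝ≥0∞) :
    ∑' k, f k = ∑' (q) (t), f (Fin.cons q t) := by
  rw [← (Fin.consEquiv fun _ => α).tsum_eq, ← ENNReal.tsum_prod]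
  rfl

theorem hasSum_of_tsum_ofReal_eq {α : Type*} {f : α → ℝ} (hf : ∀ a, 0 ≤ f a) {c : ℝ}
    (hc : 0 ≤ c) (h : ∑' a, ENNReal.ofReal (f a) = ENNReal.ofReal c) : HasSum f c := by
  have hsum := ENNReal.hasSum_toReal (h ▸ ENNReal.ofReal_ne_top)
  rw [← ENNReal.tsum_toReal_eq fun _ => ENNReal.ofReal_ne_top, h,
    ENNReal.toReal_ofReal hc] at hsum
  simpa only [ENNReal.toReal_ofReal (hf _)] using hsum

def chainAmp (φ : ℕ → ℕ → ℝ → ℝ) (ω : ℝ → ℕ → ℝ) (n : ℕ) (x : Fin (n + 1) → ℝ)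
    (k : Fin (n + 1) → ℕ) : ℝ :=
  ω (x (Fin.last n)) (k (Fin.last n)) * ∏ j : Fin n, φ (k j.castSucc) (k j.succ) (x j.castSucc)

noncomputable def chainEnergy (φ : ℕ → ℕ → ℝ → ℝ) (ω : ℝ → ℕ → ℝ) :
    (n : ℕ) → (Fin (n + 1) → ℝ) → ℕ → ℝ≥0∞
  | 0, x, p => ENNReal.ofReal (ω (x 0) p ^ 2)
  | n + 1, x, p => ∑' q, ENNReal.ofReal (φ p q (x 0) ^ 2) * chainEnergy φ ω n (Fin.tail x) q

section Chain

variable (φ : ℕ → ℕ → ℝ → ℝ) (ω : ℝ → ℕ → ℝ)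

theorem chainAmp_cons {n : ℕ} (x : Fin (n + 2) → ℝ) (p : ℕ) (k : Fin (n + 1) → ℕ) :
    chainAmp φ ω (n + 1) x (Fin.cons p k) =
      φ p (k 0) (x 0) * chainAmp φ ω n (Fin.tail x) k := by
  simp only [chainAmp, Fin.prod_univ_succ, ← Fin.succ_last, Fin.cons_succ, ← Fin.succ_castSucc,
    Fin.castSucc_zero, Fin.cons_zero, Fin.tail]
  ring

theorem tsum_ofReal_chainAmp_cons_sq :
    ∀ (n : ℕ) (x : Fin (n + 1) → ℝ) (p : ℕ),
      ∑' t, ENNReal.ofReal (chainAmp φ ω n x (Fin.cons p t) ^ 2) = chainEnergy φ ω n x p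
  | 0, x, p => by
    rw [tsum_eq_single default fun t ht => (ht (Subsingleton.elim t default)).elim]
    simp [chainAmp, chainEnergy, Fin.last]
  | n + 1, x, p => by
    simp_rw [chainEnergy, chainAmp_cons, mul_pow, ENNReal.ofReal_mul (sq_nonneg _),
      ENNReal.tsum_fin_cons, Fin.cons_zero, ENNReal.tsum_mul_left, tsum_ofReal_chainAmp_cons_sq]

theorem tsum_ofReal_indicator_mul_chainAmp_sq (n : ℕ) (x : Fin (n + 1) → ℝ) (p : ℕ) :
    ∑' k, ENNReal.ofReal (((if k 0 = p then 1 else 0) * chainAmp φ ω n x k) ^ 2) =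
      chainEnergy φ ω n x p := by
  rw [ENNReal.tsum_fin_cons, ← tsum_ofReal_chainAmp_cons_sq,
    tsum_eq_single p fun q hq => by simp [hq]]
  simp

end Chain

noncomputable abbrev energyA : (n : ℕ) → (Fin (n + 1) → ℝ) → ℕ → ℝ≥0∞ :=
  chainEnergy (fun p q y => ampF p q y) (fun y p => y ^ p)

noncomputable abbrev energyB : (n : ℕ) → (Fin (n + 1) → ℝ) → ℕ → ℝ≥0∞ :=
  chainEnergy (fun p q y => ampG p q y) (fun y p => √(1 - y ^ 2) * y ^ p)

theorem energyA_zero : ∀ (n : ℕ) (x : Fin (n + 1) → ℝ), energyA n x 0 = 1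
  | 0, x => by simp [chainEnergy]
  | n + 1, x => by
    rw [energyA, chainEnergy]
    simp only [ampF_zero_left]
    rw [tsum_eq_single 0 fun q hq => by simp [hq]]
    simpa using energyA_zero n (Fin.tail x)

theorem energyA_succ_add_energyB : ∀ (n : ℕ) (x : Fin (n + 1) → ℝ), (∀ j, x j ^ 2 ≤ 1) →
    ∀ p, energyA n x (p + 1) + energyB n x p = energyA n x p
  | 0, x, hx, p => by
    rw [energyA, energyB, chainEnergy, chainEnergy, chainEnergy,
      ← ENNReal.ofReal_add (sq_nonneg _) (sq_nonneg _), sq_pow_succ_add_sq_sqrt_mul_pow (hx 0)]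
  | n + 1, x, hx, p => by
    refine ENNReal.tsum_mul_add_tsum_mul_of_balance ?_ (fun q => ?_) ?_
      (fun q => (energyA_succ_add_energyB n (Fin.tail x) (fun j => hx j.succ) q).symm)
      ((energyA_zero n _).trans_ne ENNReal.one_ne_top)
    · rw [← ENNReal.ofReal_add (sq_nonneg _) (sq_nonneg _)]
      exact_mod_cast congrArg ENNReal.ofReal (ampF_sq_add_ampG_sq_zero (hx 0) p)
    · rw [← ENNReal.ofReal_add (sq_nonneg _) (sq_nonneg _),
        ← ENNReal.ofReal_add (sq_nonneg _) (sq_nonneg _)]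
      exact_mod_cast congrArg ENNReal.ofReal (ampF_sq_add_ampG_sq_succ (hx 0) p q)
    · simpa [Function.comp_def] using
        (ENNReal.continuous_ofReal.tendsto _).comp ((tendsto_ampG_atTop (hx 0) p).pow 2)

theorem conservation_of_energy_general (n : ℕ) (x : Fin (n+1) → ℝ)
    (hx : ∀ j, x j ∈ Set.Icc (-1 : ℝ) 1) :
    HasSum (fun k : Fin (n+1) → ℕ => ampA n x k ^ 2 + ampB n x k ^ 2) 1 := by
  have hx2 (j : Fin (n + 1)) : x j ^ 2 ≤ 1 := (sq_le_one_iff_abs_le_one _).2 (abs_le.2 (hx j))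
  have hA (k : Fin (n + 1) → ℕ) : ampA n x k = (if k 0 = 1 then 1 else 0) *
      chainAmp (fun p q y => ampF p q y) (fun y p => y ^ p) n x k := mul_assoc _ _ _
  have hB (k : Fin (n + 1) → ℕ) : ampB n x k = (if k 0 = 0 then 1 else 0) *
      chainAmp (fun p q y => ampG p q y) (fun y p => √(1 - y ^ 2) * y ^ p) n x k := by
    simp only [ampB, chainAmp, mul_assoc]
  refine hasSum_of_tsum_ofReal_eq (fun k => by positivity) zero_le_one ?_
  rw [ENNReal.ofReal_one, ← energyA_zero n x, ← energyA_succ_add_energyB n x hx2 0]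
  simp_rw [ENNReal.ofReal_add (sq_nonneg _) (sq_nonneg _), ENNReal.tsum_add, hA, hB,
    tsum_ofReal_indicator_mul_chainAmp_sq]

/-- conservation of energy — the squared reflection and transmission
    amplitudes sum to 1. -/
theorem conservation_of_energy (n : ℕ) (hn : 1 ≤ n) (x : Fin (n+1) → ℝ)
    (hx : ∀ j, x j ∈ Set.Icc (-1 : ℝ) 1) :
    HasSum (fun k : Fin (n+1) → ℕ => ampA n x k ^ 2 + ampB n x k ^ 2) 1 :=
  conservation_of_energy_general n x hx
end

section
/- Let p, q be integers with min{p,q} ≥ 0, and set α = |p - q| and N = min{p,q}. Then for every x ∈ [-1,1]: if p ≤ q then g^{(p,q)}(x) = (-x)^{α} √(1 - x^2) · P^{(α,0)}_N(1 - 2x^2), and if p > q then g^{(p,q)}(x) = x^{α} √(1 - x^2) · P^{(α,0)}_N(1 - 2x^2). -/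
/-- Jacobi polynomial `P^{(α,β)}_N`. -/
noncomputable def jacobiP (a b N : ℕ) (z : ℝ) : ℝ :=
  ∑ j ∈ Finset.range (N + 1),
    ((N + a).choose (N - j) : ℝ) * ((N + b).choose j : ℝ) *
      ((z - 1) / 2) ^ j * ((z + 1) / 2) ^ (N - j)

open Finset

/-- Reindexing `i ↦ N - i` turns the sum into the expansion of `P^{(a,0)}_N` at `z = 1 - 2x²`,
where `(z - 1)/2 = -x²` and `(z + 1)/2 = 1 - x²`. -/
lemma sum_choose_mul_choose_eq_jacobiP (N a : ℕ) (x : ℝ) :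
    ∑ i ∈ range (N + 1), (-1 : ℝ) ^ (N - i) * (N.choose i : ℝ) * ((N + a).choose i : ℝ) *
      x ^ (a + 2 * (N - i)) * (1 - x ^ 2) ^ i
    = x ^ a * jacobiP a 0 N (1 - 2 * x ^ 2) := by
  rw [jacobiP, mul_sum, ← sum_range_reflect]
  refine sum_congr rfl fun j hj => ?_
  have hjN : j ≤ N := Nat.lt_succ_iff.mp (mem_range.mp hj)
  rw [show N + 1 - 1 - j = N - j by omega, Nat.sub_sub_self hjN, Nat.choose_symm hjN,
    show (1 - 2 * x ^ 2 - 1) / 2 = -x ^ 2 by ring, show (1 - 2 * x ^ 2 + 1) / 2 = 1 - x ^ 2 by ring,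
    add_zero]
  ring

lemma ampG_natCast_s5 (m n : ℕ) (x : ℝ) :
    ampG m n x = √(1 - x ^ 2) * ∑ j ∈ range (min m n + 1),
      (-1 : ℝ) ^ (n - j) * (m.choose j : ℝ) * (n.choose j : ℝ) *
        x ^ (m + n - 2 * j) * (1 - x ^ 2) ^ j := by
  rw [ampG, if_neg (by omega), ← Nat.cast_min, Nat.range_succ_eq_Icc_zero]
  simp only [Int.toNat_natCast]

lemma ampG_natCast_self_add (N a : ℕ) (x : ℝ) :
    ampG N (N + a : ℕ) x = (-x) ^ a * √(1 - x ^ 2) * jacobiP a 0 N (1 - 2 * x ^ 2) := by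
  have hsign : ∀ j ∈ range (N + 1), (-1 : ℝ) ^ (N + a - j) * (N.choose j : ℝ) *
      ((N + a).choose j : ℝ) * x ^ (N + (N + a) - 2 * j) * (1 - x ^ 2) ^ j =
      (-1) ^ a * ((-1 : ℝ) ^ (N - j) * (N.choose j : ℝ) * ((N + a).choose j : ℝ) *
        x ^ (a + 2 * (N - j)) * (1 - x ^ 2) ^ j) := fun j hj => by
    have hjN : j ≤ N := Nat.lt_succ_iff.mp (mem_range.mp hj)
    rw [show N + a - j = a + (N - j) by omega, show N + (N + a) - 2 * j = a + 2 * (N - j) by omega]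
    ring
  rw [ampG_natCast_s5, min_eq_left (Nat.le_add_right N a), sum_congr rfl hsign, ← mul_sum,
    sum_choose_mul_choose_eq_jacobiP, neg_pow]
  ring

lemma ampG_natCast_add_self (N a : ℕ) (x : ℝ) :
    ampG (N + a : ℕ) N x = x ^ a * √(1 - x ^ 2) * jacobiP a 0 N (1 - 2 * x ^ 2) := by
  have hswap : ∀ j ∈ range (N + 1), (-1 : ℝ) ^ (N - j) * ((N + a).choose j : ℝ) *
      (N.choose j : ℝ) * x ^ (N + a + N - 2 * j) * (1 - x ^ 2) ^ j =
      (-1 : ℝ) ^ (N - j) * (N.choose j : ℝ) * ((N + a).choose j : ℝ) *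
        x ^ (a + 2 * (N - j)) * (1 - x ^ 2) ^ j := fun j hj => by
    have hjN : j ≤ N := Nat.lt_succ_iff.mp (mem_range.mp hj)
    rw [show N + a + N - 2 * j = a + 2 * (N - j) by omega]
    ring
  rw [ampG_natCast_s5, min_eq_right (Nat.le_add_right N a), sum_congr rfl hswap,
    sum_choose_mul_choose_eq_jacobiP]
  ring

theorem ampG_eq_jacobi_general (p q : ℤ) (h : 0 ≤ min p q) (x : ℝ) :
    (p ≤ q → ampG p q x =
      (-x) ^ (p - q).natAbs * Real.sqrt (1 - x ^ 2) *
        jacobiP (p - q).natAbs 0 (min p q).toNat (1 - 2 * x ^ 2)) ∧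
    (q < p → ampG p q x =
      x ^ (p - q).natAbs * Real.sqrt (1 - x ^ 2) *
        jacobiP (p - q).natAbs 0 (min p q).toNat (1 - 2 * x ^ 2)) := by
  lift p to ℕ using (le_min_iff.mp h).1
  lift q to ℕ using (le_min_iff.mp h).2
  refine ⟨fun hpq => ?_, fun hqp => ?_⟩
  · obtain ⟨a, rfl⟩ := Nat.exists_eq_add_of_le (Int.ofNat_le.mp hpq)
    rw [ampG_natCast_self_add]
    congr <;> omega
  · obtain ⟨a, rfl⟩ := Nat.exists_eq_add_of_le (Int.ofNat_lt.mp hqp).le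
    rw [ampG_natCast_add_self]
    congr <;> omega

/-- the amplitude factor `g^{(p,q)}` in terms of Jacobi polynomials
    `P^{(α,0)}_N` with `α = |p-q|`, `N = min{p,q}`. -/
theorem ampG_eq_jacobi (p q : ℤ) (h : 0 ≤ min p q) (x : ℝ) (hx : x ∈ Set.Icc (-1 : ℝ) 1) :
    (p ≤ q → ampG p q x =
      (-x) ^ (p - q).natAbs * Real.sqrt (1 - x ^ 2) *
        jacobiP (p - q).natAbs 0 (min p q).toNat (1 - 2 * x ^ 2)) ∧
    (q < p → ampG p q x =
      x ^ (p - q).natAbs * Real.sqrt (1 - x ^ 2) *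
        jacobiP (p - q).natAbs 0 (min p q).toNat (1 - 2 * x ^ 2)) :=
  ampG_eq_jacobi_general p q h x
end

section
/- Let n ≥ 1 and let τ* ∈ ℝ^{n+1} have positive entries with k ↦ ⟨k,τ*⟩ injective on 𝓛^{τ*}. Define the cell C = {τ ∈ ℝ^{n+1} : all entries of τ are positive, 𝓛^τ = 𝓛^{τ*}, and for all k, k' ∈ 𝓛^{τ*}: ⟨k,τ⟩ ≤ ⟨k',τ⟩ ⇔ ⟨k,τ*⟩ ≤ ⟨k',τ*⟩}. Then: (i) C is convex; (ii) C is open in ℝ^{n+1}; (iii) C is closed under multiplication by positive scalars (αC = C for every α > 0); and (iv) the normalized cell Ĉ = C ∩ {x : ⟨𝟙,x⟩ = 1} is convex and open relative to the standard open simplex Δ_n = {x ∈ ℝ^{n+1} : all x_j > 0, ⟨𝟙,x⟩ = 1}. -/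
/-- `𝓛_n`: lattice points in `ℕ^{n+1}` supported on initial intervals. -/
def latticeL (n : ℕ) : Set (Fin (n+1) → ℕ) :=
  {k | ∀ j : Fin n, k j.castSucc = 0 → k j.succ = 0}

/-- The linear functional `L_τ(k) = ⟨k,τ⟩`. -/
noncomputable def ipL (n : ℕ) (k : Fin (n+1) → ℕ) (τ : Fin (n+1) → ℝ) : ℝ :=
  ∑ j, (k j : ℝ) * τ j

/-- `𝓛^τ = {k ∈ 𝓛_n : 0 < ⟨k,τ⟩ ≤ ⟨𝟙,τ⟩}`. -/
noncomputable def latticeLT (n : ℕ) (τ : Fin (n+1) → ℝ) : Set (Fin (n+1) → ℕ) :=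
  {k | k ∈ latticeL n ∧ 0 < ipL n k τ ∧ ipL n k τ ≤ ∑ j, τ j}

/-!
A positive `τ` lies in the cell of `τ*` exactly when it satisfies a family of strict homogeneous
linear inequalities: `⟨𝟙,τ⟩ < ⟨k,τ⟩` for every nonzero `k ∈ 𝓛_n \ 𝓛^{τ*}`, and
`⟨k,τ⟩ < ⟨k',τ⟩` for every pair in `𝓛^{τ*}` ordered that way by `τ*`; injectivity turns the
order agreement into such strict inequalities and yields `⟨k,τ⟩ ≤ ⟨𝟙,τ⟩` from the pair `(k, 𝟙)`.
An intersection of open half-spaces through the origin is a convex cone. It is open because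
the left-hand sides range over the finite set `{𝟙} ∪ 𝓛^{τ*}`: near a positive `τ` only finitely
many `k` have `⟨k,τ⟩` small, so only finitely many inequalities are not automatic.
-/

theorem Set.InjOn.le_iff_le_of_lt_imp_lt {ι α β : Type*} [LinearOrder α] [Preorder β]
    {f : ι → α} {g : ι → β} {s : Set ι} (hf : s.InjOn f)
    (h : ∀ i ∈ s, ∀ j ∈ s, f i < f j → g i < g j) {i j : ι} (hi : i ∈ s) (hj : j ∈ s) :
    g i ≤ g j ↔ f i ≤ f j := by
  refine ⟨fun hg => le_of_not_gt fun hlt => (h j hj i hi hlt).not_ge hg, fun hle => ?_⟩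
  rcases hle.lt_or_eq with hlt | heq
  · exact (h i hi j hj hlt).le
  · rw [hf hi hj heq]

section ipL

variable {n : ℕ}

lemma ipL_add (k : Fin (n+1) → ℕ) (τ τ' : Fin (n+1) → ℝ) :
    ipL n k (τ + τ') = ipL n k τ + ipL n k τ' := by
  simp [ipL, mul_add, Finset.sum_add_distrib]

lemma ipL_smul (k : Fin (n+1) → ℕ) (a : ℝ) (τ : Fin (n+1) → ℝ) :
    ipL n k (a • τ) = a * ipL n k τ := by
  simp [ipL, Finset.mul_sum, mul_left_comm]

lemma ipL_one (τ : Fin (n+1) → ℝ) : ipL n 1 τ = ∑ j, τ j := by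
  simp [ipL]

lemma continuous_ipL (k : Fin (n+1) → ℕ) : Continuous (ipL n k) :=
  continuous_finsetSum _ fun j _ => continuous_const.mul (continuous_apply j)

lemma ipL_mono (k : Fin (n+1) → ℕ) {σ τ : Fin (n+1) → ℝ} (h : ∀ j, σ j ≤ τ j) :
    ipL n k σ ≤ ipL n k τ :=
  Finset.sum_le_sum fun j _ => mul_le_mul_of_nonneg_left (h j) (Nat.cast_nonneg _)

lemma mul_le_ipL (k : Fin (n+1) → ℕ) {τ : Fin (n+1) → ℝ} (hτ : ∀ j, 0 ≤ τ j) (j : Fin (n+1)) :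
    k j * τ j ≤ ipL n k τ :=
  Finset.single_le_sum (f := fun i => (k i : ℝ) * τ i)
    (fun i _ => mul_nonneg (Nat.cast_nonneg _) (hτ i)) (Finset.mem_univ j)

lemma ipL_pos {k : Fin (n+1) → ℕ} {τ : Fin (n+1) → ℝ} (hτ : ∀ j, 0 < τ j) (hk : k ≠ 0) :
    0 < ipL n k τ := by
  obtain ⟨j, hj⟩ := Function.ne_iff.mp hk
  exact (mul_pos (by exact_mod_cast Nat.pos_of_ne_zero hj) (hτ j)).trans_le
    (mul_le_ipL k (fun i => (hτ i).le) j)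

lemma finite_setOf_ipL_le {τ : Fin (n+1) → ℝ} (hτ : ∀ j, 0 < τ j) (c : ℝ) :
    {k | ipL n k τ ≤ c}.Finite := by
  refine (Set.Finite.pi fun j => Set.finite_Iic ⌊c / τ j⌋₊).subset fun k hk j _ => ?_
  refine Nat.le_floor ((le_div_iff₀ (hτ j)).2 ?_)
  exact (mul_le_ipL k (fun i => (hτ i).le) j).trans hk

lemma ne_zero_of_mem_latticeLT {k : Fin (n+1) → ℕ} {τ : Fin (n+1) → ℝ}
    (hk : k ∈ latticeLT n τ) : k ≠ 0 := by
  rintro rfl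
  simpa [ipL] using hk.2.1

lemma one_mem_latticeLT {τ : Fin (n+1) → ℝ} (hτ : ∀ j, 0 < τ j) : 1 ∈ latticeLT n τ :=
  ⟨fun _ h => absurd h one_ne_zero, ipL_pos hτ one_ne_zero, (ipL_one τ).le⟩

lemma finite_latticeLT {τ : Fin (n+1) → ℝ} (hτ : ∀ j, 0 < τ j) : (latticeLT n τ).Finite :=
  (finite_setOf_ipL_le hτ _).subset fun _ hk => hk.2.2

end ipL

section ineqCone

variable {n : ℕ}

def ineqCone (n : ℕ) (Q : Set ((Fin (n+1) → ℕ) × (Fin (n+1) → ℕ))) : Set (Fin (n+1) → ℝ) :=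
  {τ | (∀ j, 0 < τ j) ∧ ∀ p ∈ Q, ipL n p.1 τ < ipL n p.2 τ}

variable {Q : Set ((Fin (n+1) → ℕ) × (Fin (n+1) → ℕ))}

lemma convex_ineqCone : Convex ℝ (ineqCone n Q) := by
  rintro τ ⟨hpos, hQ⟩ τ' ⟨hpos', hQ'⟩ a b ha hb hab
  refine ⟨fun j => by simpa using convex_Ioi (0 : ℝ) (hpos j) (hpos' j) ha hb hab,
    fun p hp => ?_⟩
  have := convex_Ioi (0 : ℝ) (sub_pos.2 (hQ p hp)) (sub_pos.2 (hQ' p hp)) ha hb hab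
  simp only [ipL_add, ipL_smul, Set.mem_Ioi, smul_eq_mul] at this ⊢
  linarith

lemma smul_mem_ineqCone_iff {α : ℝ} (hα : 0 < α) {τ : Fin (n+1) → ℝ} :
    α • τ ∈ ineqCone n Q ↔ τ ∈ ineqCone n Q := by
  simp [ineqCone, ipL_smul, mul_lt_mul_iff_right₀ hα, hα]

open Pointwise in
lemma smul_ineqCone {α : ℝ} (hα : 0 < α) : α • ineqCone n Q = ineqCone n Q := by
  ext τ
  rw [Set.mem_smul_set_iff_inv_smul_mem₀ hα.ne', smul_mem_ineqCone_iff (inv_pos.2 hα)]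

lemma isOpen_ineqCone (hQ : (Prod.fst '' Q).Finite) : IsOpen (ineqCone n Q) := by
  rw [isOpen_iff_mem_nhds]
  rintro τ ⟨hpos, hQτ⟩
  set σ : Fin (n+1) → ℝ := (2⁻¹ : ℝ) • τ
  have hσ : ∀ j, 0 < σ j := fun j => by simpa [σ] using hpos j
  -- only the inequalities whose right-hand side is small at `σ` can fail near `τ`
  set F := ⋃ a ∈ Prod.fst '' Q, {k | ipL n k σ ≤ ipL n a τ + 1}
  have hF : F.Finite := hQ.biUnion fun a _ => finite_setOf_ipL_le hσ _
  have hQF : (Q ∩ Prod.snd ⁻¹' F).Finite :=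
    (hQ.prod hF).subset fun p hp => ⟨⟨p, hp.1, rfl⟩, hp.2⟩
  set V := (Set.univ.pi fun j => Set.Ioi (σ j)) ∩
    (⋂ a ∈ Prod.fst '' Q, {τ' | ipL n a τ' < ipL n a τ + 1}) ∩
    ⋂ p ∈ Q ∩ Prod.snd ⁻¹' F, {τ' | ipL n p.1 τ' < ipL n p.2 τ'}
  have hV : IsOpen V :=
    ((isOpen_set_pi Set.finite_univ fun _ _ => isOpen_Ioi).inter
      (hQ.isOpen_biInter fun a _ => isOpen_lt (continuous_ipL a) continuous_const)).inter
      (hQF.isOpen_biInter fun p _ => isOpen_lt (continuous_ipL _) (continuous_ipL _))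
  have hτV : τ ∈ V := by
    refine ⟨⟨fun j _ => ?_, Set.mem_iInter₂.2 fun a _ => lt_add_one (ipL n a τ)⟩,
      Set.mem_iInter₂.2 fun p hp => hQτ p hp.1⟩
    show (2⁻¹ : ℝ) * τ j < τ j
    linarith [hpos j]
  refine Filter.mem_of_superset (hV.mem_nhds hτV) ?_
  rintro τ' ⟨⟨hστ', hbound⟩, hsmall⟩
  have hστ' : ∀ j, σ j < τ' j := fun j => hστ' j (Set.mem_univ j)
  refine ⟨fun j => (hσ j).trans (hστ' j), fun p hp => ?_⟩
  by_cases hpF : p.2 ∈ F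
  · exact Set.mem_iInter₂.1 hsmall p ⟨hp, hpF⟩
  · have hbig : ipL n p.1 τ + 1 < ipL n p.2 σ := by
      by_contra! hle
      exact hpF (Set.mem_biUnion ⟨p, hp, rfl⟩ hle)
    calc ipL n p.1 τ' < ipL n p.1 τ + 1 := Set.mem_iInter₂.1 hbound p.1 ⟨p, hp, rfl⟩
      _ < ipL n p.2 σ := hbig
      _ ≤ ipL n p.2 τ' := ipL_mono _ fun j => (hστ' j).le

end ineqCone

section cell

variable {n : ℕ}

def cell (n : ℕ) (τs : Fin (n+1) → ℝ) : Set (Fin (n+1) → ℝ) :=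
  {τ | (∀ j, 0 < τ j) ∧ latticeLT n τ = latticeLT n τs ∧
    ∀ k ∈ latticeLT n τs, ∀ k' ∈ latticeLT n τs,
      (ipL n k τ ≤ ipL n k' τ ↔ ipL n k τs ≤ ipL n k' τs)}

def cellConstraints (n : ℕ) (τs : Fin (n+1) → ℝ) :
    Set ((Fin (n+1) → ℕ) × (Fin (n+1) → ℕ)) :=
  (fun k => (1, k)) '' (latticeL n \ insert 0 (latticeLT n τs)) ∪
    {p | p.1 ∈ latticeLT n τs ∧ p.2 ∈ latticeLT n τs ∧ ipL n p.1 τs < ipL n p.2 τs}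

lemma finite_fst_image_cellConstraints {τs : Fin (n+1) → ℝ} (hτs : ∀ j, 0 < τs j) :
    (Prod.fst '' cellConstraints n τs).Finite := by
  refine ((finite_latticeLT hτs).insert 1).subset ?_
  rintro _ ⟨p, ⟨k, -, rfl⟩ | hp, rfl⟩
  · exact Or.inl rfl
  · exact Or.inr hp.1

lemma forall_mem_cellConstraints_iff {τs τ : Fin (n+1) → ℝ} :
    (∀ p ∈ cellConstraints n τs, ipL n p.1 τ < ipL n p.2 τ) ↔
      (∀ k ∈ latticeL n, k ≠ 0 → k ∉ latticeLT n τs → ∑ j, τ j < ipL n k τ) ∧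
      ∀ k ∈ latticeLT n τs, ∀ k' ∈ latticeLT n τs,
        ipL n k τs < ipL n k' τs → ipL n k τ < ipL n k' τ := by
  simp only [cellConstraints, Set.mem_union, or_imp, forall_and, Set.forall_mem_image,
    Set.mem_sdiff, Set.mem_insert_iff, not_or, and_imp, Set.mem_ofPred_eq, Prod.forall, ipL_one]
  exact and_congr ⟨fun h k hk => h hk, fun h k hk => h k hk⟩
    ⟨fun h k hk k' hk' => h k k' hk hk', fun h k k' hk hk' => h k hk k' hk'⟩

lemma cell_eq_ineqCone {τs : Fin (n+1) → ℝ} (hτs : ∀ j, 0 < τs j)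
    (hinj : Set.InjOn (fun k => ipL n k τs) (latticeLT n τs)) :
    cell n τs = ineqCone n (cellConstraints n τs) := by
  ext τ
  refine and_congr_right fun hpos => ?_
  rw [forall_mem_cellConstraints_iff]
  constructor
  · rintro ⟨hL, hord⟩
    refine ⟨fun k hk hk0 hkS => ?_, fun k hk k' hk' hlt => ?_⟩
    · by_contra! hle
      exact hkS (hL ▸ ⟨hk, ipL_pos hpos hk0, hle⟩)
    · exact lt_of_not_ge fun hle => hlt.not_ge ((hord k' hk' k hk).1 hle)
  · rintro ⟨hout, hstrict⟩
    have hord := fun k (hk : k ∈ latticeLT n τs) k' (hk' : k' ∈ latticeLT n τs) =>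
      hinj.le_iff_le_of_lt_imp_lt (g := fun k => ipL n k τ) hstrict hk hk'
    refine ⟨Set.ext fun k => ⟨fun hk => ?_, fun hk => ?_⟩, hord⟩
    · by_contra hkS
      exact (hout k hk.1 (ne_zero_of_mem_latticeLT hk) hkS).not_ge hk.2.2
    · refine ⟨hk.1, ipL_pos hpos (ne_zero_of_mem_latticeLT hk), ?_⟩
      rw [← ipL_one, hord k hk 1 (one_mem_latticeLT hτs), ipL_one]
      exact hk.2.2

end cell

open Pointwise in
theorem cell_structure_general (n : ℕ) (τs : Fin (n+1) → ℝ) (hτs : ∀ j, 0 < τs j)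
    (hinj : Set.InjOn (fun k => ipL n k τs) (latticeLT n τs)) :
    let C : Set (Fin (n+1) → ℝ) :=
      {τ | (∀ j, 0 < τ j) ∧ latticeLT n τ = latticeLT n τs ∧
        ∀ k ∈ latticeLT n τs, ∀ k' ∈ latticeLT n τs,
          (ipL n k τ ≤ ipL n k' τ ↔ ipL n k τs ≤ ipL n k' τs)}
    Convex ℝ C ∧ IsOpen C ∧ (∀ α : ℝ, 0 < α → α • C = C) ∧
      Convex ℝ (C ∩ {x | (∑ j, x j) = 1}) ∧
      ∃ U : Set (Fin (n+1) → ℝ), IsOpen U ∧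
        C ∩ {x | (∑ j, x j) = 1} =
          U ∩ {x : Fin (n+1) → ℝ | (∀ j, 0 < x j) ∧ (∑ j, x j) = 1} := by
  intro C
  have hC : C = ineqCone n (cellConstraints n τs) := cell_eq_ineqCone hτs hinj
  have hopen : IsOpen C := hC ▸ isOpen_ineqCone (finite_fst_image_cellConstraints hτs)
  have hsum : IsLinearMap ℝ fun x : Fin (n+1) → ℝ => ∑ j, x j :=
    ⟨fun x y => Finset.sum_add_distrib, fun c x => by simp [Finset.mul_sum]⟩
  refine ⟨hC ▸ convex_ineqCone, hopen, fun α hα => hC ▸ smul_ineqCone hα,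
    (hC ▸ convex_ineqCone).inter (convex_hyperplane hsum 1), C, hopen, ?_⟩
  exact Set.ext fun x => ⟨fun ⟨hx, h1⟩ => ⟨hx, hx.1, h1⟩, fun ⟨hx, _, h1⟩ => ⟨hx, h1⟩⟩

open Pointwise in
/-- each cell of the travel-time domain is an open convex cone, and the
    normalized cell is a convex set, open relative to the standard simplex. -/
theorem cell_structure (n : ℕ) (hn : 1 ≤ n) (τs : Fin (n+1) → ℝ) (hτs : ∀ j, 0 < τs j)
    (hinj : Set.InjOn (fun k => ipL n k τs) (latticeLT n τs)) :
    let C : Set (Fin (n+1) → ℝ) :=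
      {τ | (∀ j, 0 < τ j) ∧ latticeLT n τ = latticeLT n τs ∧
        ∀ k ∈ latticeLT n τs, ∀ k' ∈ latticeLT n τs,
          (ipL n k τ ≤ ipL n k' τ ↔ ipL n k τs ≤ ipL n k' τs)}
    Convex ℝ C ∧ IsOpen C ∧ (∀ α : ℝ, 0 < α → α • C = C) ∧
      Convex ℝ (C ∩ {x | (∑ j, x j) = 1}) ∧
      ∃ U : Set (Fin (n+1) → ℝ), IsOpen U ∧
        C ∩ {x | (∑ j, x j) = 1} =
          U ∩ {x : Fin (n+1) → ℝ | (∀ j, 0 < x j) ∧ (∑ j, x j) = 1} :=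
  cell_structure_general n τs hτs hinj
end
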